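/- arXiv:0911.4020 — 4 statements merged into one kernel-verified Lean document; each statement's English description precedes it below -/
import Mathlib

section
/- Let f and g be convex functions on an open convex set C ⊂ ℝⁿ and let d := f − g. Assume that for some x ∈ C and v ∈ ℝⁿ the two-sided directional derivatives f′(x,v) := lim_{t→0} (f(x+tv)−f(x))/t and g′(x,v) := lim_{t→0} (g(x+tv)−g(x))/t both exist and f′(x,v) ≠ g′(x,v). Then x is not a critical point of d. -/
open Filter Metric Set MeasureTheory Module
open scoped Topology NNReal ENNReal

noncomputable section

section BasicDefs

variable {E F : Type*} [NormedAddCommGroup E] [NormedSpace ℝ E]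
  [NormedAddCommGroup F] [NormedSpace ℝ F]

/-- The Clarke generalized directional derivative
`f⁰(a,v) = limsup_{z→a, t→0⁺} (f(z+tv)-f(z))/t`. -/
def clarkeDeriv (f : E → ℝ) (a v : E) : ℝ :=
  Filter.limsup (fun p : E × ℝ => (f (p.1 + p.2 • v) - f p.1) / p.2)
    ((𝓝 a) ×ˢ (𝓝[>] (0 : ℝ)))

/-- `a` is a critical point of `f` (in the sense of Clarke): `f⁰(a,v) ≥ 0` for every
direction `v`, i.e. `0` belongs to the Clarke subdifferential of `f` at `a`. -/
def IsCriticalPt (f : E → ℝ) (a : E) : Prop :=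
  ∀ v : E, 0 ≤ clarkeDeriv f a v

/-- `f` is locally Lipschitz on the set `G`. -/
def LocallyLipschitzOnSet (f : E → ℝ) (G : Set E) : Prop :=
  ∀ x ∈ G, ∃ K : ℝ≥0, ∃ t ∈ 𝓝 x, t ⊆ G ∧ LipschitzOnWith K f t

/-- `f` is DC (delta-convex) on the convex set `C`: a difference of two continuous
convex functions on `C`. -/
def DCOn (f : E → ℝ) (C : Set E) : Prop :=
  ∃ g h : E → ℝ, ConvexOn ℝ C g ∧ ConvexOn ℝ C h ∧
    ContinuousOn g C ∧ ContinuousOn h C ∧ ∀ x ∈ C, f x = g x - h x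

/-- `f` is locally DC on `G`: each point of `G` has a convex neighbourhood on which
`f` is DC. -/
def LocallyDCOn (f : E → ℝ) (G : Set E) : Prop :=
  ∀ x ∈ G, ∃ C : Set E, Convex ℝ C ∧ C ⊆ G ∧ C ∈ 𝓝 x ∧ DCOn f C

/-- A mapping into a finite-dimensional space is DC if its composition with every
linear functional is DC. -/
def DCOnMap (f : E → F) (C : Set E) : Prop :=
  ∀ φ : F →L[ℝ] ℝ, DCOn (fun x => φ (f x)) C

/-- Locally DC mapping. -/
def LocallyDCOnMap (f : E → F) (G : Set E) : Prop :=
  ∀ x ∈ G, ∃ C : Set E, Convex ℝ C ∧ C ⊆ G ∧ C ∈ 𝓝 x ∧ DCOnMap f C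

end BasicDefs

section InnerDefs

variable {H : Type*} [NormedAddCommGroup H] [InnerProductSpace ℝ H]

/-- `M` is a `k`-dimensional DC surface in the inner product space `H`
(a singleton when `k = 0`). -/
def IsDCSurface (M : Set H) (k : ℕ) : Prop :=
  M.Nonempty ∧
    ((k = 0 ∧ ∃ x, M = {x}) ∨
      (1 ≤ k ∧ ∀ x ∈ M, ∃ Q : Submodule ℝ H, Module.finrank ℝ Q = k ∧
        ∃ W : Set H, IsOpen W ∧ x ∈ W ∧ ∃ G₀ : Set Q, IsOpen G₀ ∧
          ∃ h : Q → Qᗮ, LocallyDCOnMap h G₀ ∧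
            M ∩ W = (fun u : Q => (u : H) + ((h u : H))) '' G₀))

/-- `u` is semiconcave with semiconcavity constant `c` on `C`:
`x ↦ u x - (c/2)‖x‖²` is concave on `C`. -/
def SemiconcaveOn (u : H → ℝ) (C : Set H) (c : ℝ) : Prop :=
  ConcaveOn ℝ C (fun x => u x - c / 2 * ‖x‖ ^ 2)

/-- `u` is locally semiconcave on the open set `G`: around every point of `G` there
is an open ball on which `u` is semiconcave for some constant. -/
def LocallySemiconcaveOn (u : H → ℝ) (G : Set H) : Prop :=
  ∀ x ∈ G, ∃ δ > 0, ball x δ ⊆ G ∧ ∃ c : ℝ, SemiconcaveOn u (ball x δ) c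

/-- `M` is a `k`-dimensional semiconcave surface in the inner product space `H`
(used with `k = dim H - 1`). -/
def IsSemiconcaveSurface (M : Set H) (k : ℕ) : Prop :=
  M.Nonempty ∧ ∀ x ∈ M, ∃ Q : Submodule ℝ H, Module.finrank ℝ Q = k ∧
    ∃ W : Set H, IsOpen W ∧ x ∈ W ∧ ∃ G₀ : Set Q, IsOpen G₀ ∧
      ∃ v : Qᗮ, v ≠ 0 ∧ ∃ s : Q → ℝ, LocallySemiconcaveOn s G₀ ∧
        M ∩ W = (fun u : Q => (u : H) + s u • (v : H)) '' G₀

end InnerDefs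

section MetricDefs

variable {X : Type*} [MetricSpace X]

/-- `q` has a unique nearest point in `A`. -/
def UniqueNearestPt (A : Set X) (q : X) : Prop :=
  ∃! y, y ∈ A ∧ dist q y = Metric.infDist q A

/-- `reach(A,p) > 0`: for some `ε > 0`, every point at distance `< ε` from `p`
has a unique nearest point in `A`. -/
def ReachPosAt (A : Set X) (p : X) : Prop :=
  ∃ ε > 0, ∀ q : X, dist p q < ε → UniqueNearestPt A q

/-- `A` has locally positive reach: `reach(A,p) > 0` for every `p ∈ A`. -/
def LocallyPositiveReach (A : Set X) : Prop :=
  ∀ p ∈ A, ReachPosAt A p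

/-- `A` has positive reach: `inf_{p ∈ A} reach(A,p) > 0`. -/
def PositiveReach (A : Set X) : Prop :=
  ∃ ε > 0, ∀ p ∈ A, ∀ q : X, dist p q < ε → UniqueNearestPt A q

/-- The set `S`, with its induced metric, is an `m`-dimensional Lipschitz manifold:
every point of `S` has a relatively open neighbourhood admitting a bilipschitz
homeomorphism onto an open subset of `ℝᵐ`. -/
def IsLipschitzManifoldSet (S : Set X) (m : ℕ) : Prop :=
  ∀ a ∈ S, ∃ U : Set X, IsOpen U ∧ a ∈ U ∧
    ∃ V : Set (EuclideanSpace ℝ (Fin m)), IsOpen V ∧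
      ∃ φ : X → EuclideanSpace ℝ (Fin m), φ '' (S ∩ U) = V ∧
        ∃ c C : ℝ, 0 < c ∧ ∀ x ∈ S ∩ U, ∀ y ∈ S ∩ U,
          c * dist x y ≤ dist (φ x) (φ y) ∧ dist (φ x) (φ y) ≤ C * dist x y

end MetricDefs

/-- The norm of `X` is (Fréchet) differentiable at every nonzero point and its
derivative is a Lipschitz map on the unit sphere. -/
def NormLipschitzDeriv (X : Type*) [NormedAddCommGroup X] [NormedSpace ℝ X] : Prop :=
  (∀ x : X, x ≠ 0 → DifferentiableAt ℝ (fun y : X => ‖y‖) x) ∧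
  ∃ K : ℝ≥0, LipschitzOnWith K (fun x : X => fderiv ℝ (fun y : X => ‖y‖) x)
    (Metric.sphere (0 : X) 1)

/-!
For `0 < t ≤ s`, monotonicity of the difference quotients of a convex function bounds
`(d (z + t v) - d z) / t` by `(f (z + s v) - f z) / s + (g (z + t v - s v) - g (z + t v)) / s`.
Letting `(z, t) → (x, 0⁺)` (convex functions are continuous on open sets) and then `s → 0⁺`
gives `d⁰(x, v) ≤ f'(x, v) - g'(x, v)`. The same bound in direction `-v` reads
`d⁰(x, -v) ≤ g'(x, v) - f'(x, v)`, so criticality forces `f'(x, v) = g'(x, v)`.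
-/

section

variable {E : Type*} [NormedAddCommGroup E] [NormedSpace ℝ E]

lemma tendsto_neg_nhdsNE_zero : Tendsto (fun t : ℝ => -t) (𝓝[≠] 0) (𝓝[≠] 0) :=
  tendsto_nhdsWithin_of_tendsto_nhds_of_eventually_within _
    (by simpa using (continuous_neg.tendsto (0 : ℝ)).mono_left nhdsWithin_le_nhds)
    (eventually_nhdsWithin_of_forall fun _ ht => neg_ne_zero.2 ht)

lemma tendsto_diffQuot_neg {h : E → ℝ} {x v : E} {L : ℝ}
    (hL : Tendsto (fun t : ℝ => (h (x + t • v) - h x) / t) (𝓝[≠] 0) (𝓝 L)) :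
    Tendsto (fun t : ℝ => (h (x + t • -v) - h x) / t) (𝓝[≠] 0) (𝓝 (-L)) :=
  (hL.comp tendsto_neg_nhdsNE_zero).neg.congr fun t => by
    simp only [Function.comp_apply, neg_smul, smul_neg, div_neg, neg_neg]

lemma nhds_prod_nhdsGT_le {X : Type*} [TopologicalSpace X] (x : X) :
    𝓝 x ×ˢ 𝓝[>] (0 : ℝ) ≤ 𝓝 (x, 0) := by
  rw [nhds_prod_eq]
  exact prod_mono le_rfl nhdsWithin_le_nhds

lemma tendsto_add_smul_nhds_prod_nhdsGT (x v : E) :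
    Tendsto (fun p : E × ℝ => p.1 + p.2 • v) (𝓝 x ×ˢ 𝓝[>] 0) (𝓝 x) := by
  have h : Tendsto (fun p : E × ℝ => p.1 + p.2 • v) (𝓝 (x, 0)) (𝓝 (x + (0 : ℝ) • v)) :=
    (continuous_fst.add (continuous_snd.smul continuous_const)).tendsto _
  rw [zero_smul, add_zero] at h
  exact h.mono_left (nhds_prod_nhdsGT_le x)

lemma tendsto_shift_nhds_prod_nhdsGT (x v : E) :
    Tendsto (fun p : E × ℝ => (p.1 + p.2 • v, p.2)) (𝓝 x ×ˢ 𝓝[>] 0) (𝓝 x ×ˢ 𝓝[>] 0) :=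
  (tendsto_add_smul_nhds_prod_nhdsGT x v).prodMk tendsto_snd

lemma LipschitzOnWith.eventually_abs_diffQuot_le {h : E → ℝ} {K : ℝ≥0} {t : Set E} {x : E}
    (hh : LipschitzOnWith K h t) (ht : t ∈ 𝓝 x) (v : E) :
    ∀ᶠ p in 𝓝 x ×ˢ 𝓝[>] 0, |(h (p.1 + p.2 • v) - h p.1) / p.2| ≤ K * ‖v‖ := by
  filter_upwards [tendsto_fst.eventually_mem ht,
    (tendsto_add_smul_nhds_prod_nhdsGT x v).eventually_mem ht,
    tendsto_snd.eventually_mem self_mem_nhdsWithin] with p hp hpv (hp0 : 0 < p.2)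
  rw [abs_div, abs_of_pos hp0, div_le_iff₀ hp0, ← Real.dist_eq]
  calc dist (h (p.1 + p.2 • v)) (h p.1) ≤ K * dist (p.1 + p.2 • v) p.1 :=
        hh.dist_le_mul _ hpv _ hp
    _ = K * ‖v‖ * p.2 := by
        rw [dist_eq_norm, add_sub_cancel_left, norm_smul, Real.norm_of_nonneg hp0.le]
        ring

variable {C : Set E} {f : E → ℝ}

lemma ConvexOn.comp_add_smul (hf : ConvexOn ℝ C f) (z v : E) :
    ConvexOn ℝ {t : ℝ | z + t • v ∈ C} (fun t => f (z + t • v)) := by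
  have hline : (AffineMap.lineMap z (z + v) : ℝ → E) = fun t => z + t • v := by
    ext t
    rw [AffineMap.lineMap_apply_module', add_sub_cancel_left, add_comm]
  have h := hf.comp_affineMap (AffineMap.lineMap z (z + v))
  rw [hline] at h
  exact h

lemma ConvexOn.diffQuot_le_diffQuot (hf : ConvexOn ℝ C f) {z v : E} {t s : ℝ}
    (ht : 0 < t) (hts : t ≤ s) (hz : z ∈ C) (hzs : z + s • v ∈ C) :
    (f (z + t • v) - f z) / t ≤ (f (z + s • v) - f z) / s := by
  have hφ := hf.comp_add_smul z v
  have h0 : (0 : ℝ) ∈ {t : ℝ | z + t • v ∈ C} := by simpa using hz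
  have hzt : t ∈ {t : ℝ | z + t • v ∈ C} :=
    hφ.1.ordConnected.out h0 hzs ⟨ht.le, hts⟩
  simpa using hφ.secant_mono h0 hzt hzs ht.ne' (ht.trans_le hts).ne' hts

lemma ConvexOn.eventually_diffQuot_le (hC : IsOpen C) (hf : ConvexOn ℝ C f) {x v : E} {s : ℝ}
    (hs : 0 < s) (hx : x ∈ C) (hxs : x + s • v ∈ C) :
    ∀ᶠ p in 𝓝 x ×ˢ 𝓝[>] 0,
      (f (p.1 + p.2 • v) - f p.1) / p.2 ≤ (f (p.1 + s • v) - f p.1) / s := by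
  have hshift : {z | z + s • v ∈ C} ∈ 𝓝 x :=
    (continuous_add_const _).continuousAt.preimage_mem_nhds (hC.mem_nhds hxs)
  filter_upwards [tendsto_fst.eventually_mem (hC.mem_nhds hx),
    tendsto_fst.eventually_mem hshift, tendsto_snd.eventually_mem (Ioo_mem_nhdsGT hs)]
    with p hp hps hpt
  exact hf.diffQuot_le_diffQuot hpt.1 hpt.2.le hp hps

lemma ConvexOn.exists_lipschitzOnWith_mem_nhds [FiniteDimensional ℝ E] (hC : IsOpen C)
    (hf : ConvexOn ℝ C f) {x : E} (hx : x ∈ C) :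
    ∃ K : ℝ≥0, ∃ t ∈ 𝓝 x, LipschitzOnWith K f t := by
  simpa only [hC.nhdsWithin_eq hx] using hf.locallyLipschitzOn hC hx

variable {g : E → ℝ} {x v : E}

-- Without this lower bound, `limsup` in `ℝ` could take its junk value.
lemma ConvexOn.isCoboundedUnder_le_diffQuot_sub [FiniteDimensional ℝ E] (hC : IsOpen C)
    (hf : ConvexOn ℝ C f) (hg : ConvexOn ℝ C g) (hx : x ∈ C) :
    IsCoboundedUnder (· ≤ ·) (𝓝 x ×ˢ 𝓝[>] 0)
      (fun p : E × ℝ => ((f (p.1 + p.2 • v) - g (p.1 + p.2 • v)) - (f p.1 - g p.1)) / p.2) := by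
  obtain ⟨Kf, tf, htf, hKf⟩ := hf.exists_lipschitzOnWith_mem_nhds hC hx
  obtain ⟨Kg, tg, htg, hKg⟩ := hg.exists_lipschitzOnWith_mem_nhds hC hx
  refine isCoboundedUnder_le_of_eventually_le _ (x := -(Kf * ‖v‖ + Kg * ‖v‖)) ?_
  filter_upwards [hKf.eventually_abs_diffQuot_le htf v, hKg.eventually_abs_diffQuot_le htg v]
    with p hpf hpg
  rw [sub_sub_sub_comm, sub_div]
  linarith [neg_abs_le ((f (p.1 + p.2 • v) - f p.1) / p.2),
    le_abs_self ((g (p.1 + p.2 • v) - g p.1) / p.2)]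

lemma ConvexOn.clarkeDeriv_sub_le [FiniteDimensional ℝ E] (hC : IsOpen C)
    (hf : ConvexOn ℝ C f) (hg : ConvexOn ℝ C g) (hx : x ∈ C) {Lf Lg : ℝ}
    (hLf : Tendsto (fun s : ℝ => (f (x + s • v) - f x) / s) (𝓝[>] 0) (𝓝 Lf))
    (hLg : Tendsto (fun s : ℝ => (g (x + s • -v) - g x) / s) (𝓝[>] 0) (𝓝 Lg)) :
    clarkeDeriv (fun y => f y - g y) x v ≤ Lf + Lg := by
  have hxv : ∀ w : E, ∀ᶠ s in 𝓝[>] (0 : ℝ), x + s • w ∈ C := fun w =>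
    (((continuous_const.add (continuous_id.smul continuous_const)).tendsto' 0 x
      (by simp)).mono_left nhdsWithin_le_nhds).eventually_mem (hC.mem_nhds hx)
  refine ge_of_tendsto (hLf.add hLg) ?_
  filter_upwards [hxv v, hxv (-v), self_mem_nhdsWithin] with s hsv hsv' (hs : 0 < s)
  set P := 𝓝 x ×ˢ 𝓝[>] (0 : ℝ)
  set U : E × ℝ → ℝ := fun p =>
    (f (p.1 + s • v) - f p.1) / s + (g (p.1 + p.2 • v + s • -v) - g (p.1 + p.2 • v)) / s
  have hU_ge : ∀ᶠ p in P,
      ((f (p.1 + p.2 • v) - g (p.1 + p.2 • v)) - (f p.1 - g p.1)) / p.2 ≤ U p := by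
    filter_upwards [hf.eventually_diffQuot_le hC hs hx hsv,
      (tendsto_shift_nhds_prod_nhdsGT x v).eventually (hg.eventually_diffQuot_le hC hs hx hsv')]
      with p hpf hpg
    rw [smul_neg, add_neg_cancel_right] at hpg
    calc _ = (f (p.1 + p.2 • v) - f p.1) / p.2 + (g p.1 - g (p.1 + p.2 • v)) / p.2 := by ring
      _ ≤ U p := add_le_add hpf hpg
  have hU : Tendsto U P (𝓝 ((f (x + s • v) - f x) / s + (g (x + s • -v) - g x) / s)) := by
    have hcont : ∀ {h : E → ℝ}, ConvexOn ℝ C h → ∀ y ∈ C, ContinuousAt h y :=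
      fun hh y hy => (hh.continuousOn hC).continuousAt (hC.mem_nhds hy)
    have hshift := tendsto_add_smul_nhds_prod_nhdsGT x v
    exact ((((hcont hf _ hsv).tendsto.comp (tendsto_fst.add_const _)).sub
      ((hcont hf _ hx).tendsto.comp tendsto_fst)).div_const s).add
      ((((hcont hg _ hsv').tendsto.comp (hshift.add_const _)).sub
      ((hcont hg _ hx).tendsto.comp hshift)).div_const s)
  calc clarkeDeriv (fun y => f y - g y) x v ≤ limsup U P :=
        limsup_le_limsup hU_ge (hf.isCoboundedUnder_le_diffQuot_sub hC hg hx)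
          hU.isBoundedUnder_le
    _ = _ := hU.limsup_eq

lemma ConvexOn.clarkeDeriv_sub_le_sub [FiniteDimensional ℝ E] (hC : IsOpen C)
    (hf : ConvexOn ℝ C f) (hg : ConvexOn ℝ C g) (hx : x ∈ C) {Lf Lg : ℝ}
    (hLf : Tendsto (fun t : ℝ => (f (x + t • v) - f x) / t) (𝓝[≠] 0) (𝓝 Lf))
    (hLg : Tendsto (fun t : ℝ => (g (x + t • v) - g x) / t) (𝓝[≠] 0) (𝓝 Lg)) :
    clarkeDeriv (fun y => f y - g y) x v ≤ Lf - Lg := by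
  have hGT : 𝓝[>] (0 : ℝ) ≤ 𝓝[≠] 0 := nhdsWithin_mono 0 fun _ ht => ne_of_gt ht
  rw [sub_eq_add_neg]
  exact hf.clarkeDeriv_sub_le hC hg hx (hLf.mono_left hGT)
    ((tendsto_diffQuot_neg hLg).mono_left hGT)

end

theorem stmt1_general {n : ℕ} {C : Set (EuclideanSpace ℝ (Fin n))} (hC : IsOpen C)
    {f g : EuclideanSpace ℝ (Fin n) → ℝ}
    (hf : ConvexOn ℝ C f) (hg : ConvexOn ℝ C g)
    {x v : EuclideanSpace ℝ (Fin n)} (hx : x ∈ C) {Lf Lg : ℝ}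
    (hLf : Filter.Tendsto (fun t : ℝ => (f (x + t • v) - f x) / t) (𝓝[≠] 0) (𝓝 Lf))
    (hLg : Filter.Tendsto (fun t : ℝ => (g (x + t • v) - g x) / t) (𝓝[≠] 0) (𝓝 Lg))
    (hne : Lf ≠ Lg) :
    ¬ IsCriticalPt (fun y => f y - g y) x := by
  intro hcrit
  have hv := hf.clarkeDeriv_sub_le_sub hC hg hx hLf hLg
  have hnegv := hf.clarkeDeriv_sub_le_sub hC hg hx (tendsto_diffQuot_neg hLf)
    (tendsto_diffQuot_neg hLg)
  exact hne (by linarith [hcrit v, hcrit (-v)])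

/-- if the two-sided directional derivatives of the convex functions
`f` and `g` at `x` in the direction `v` exist and differ, then `x` is not a
critical point of `d = f - g`. -/
theorem stmt1 {n : ℕ} {C : Set (EuclideanSpace ℝ (Fin n))} (hC : IsOpen C)
    (hCconv : Convex ℝ C) {f g : EuclideanSpace ℝ (Fin n) → ℝ}
    (hf : ConvexOn ℝ C f) (hg : ConvexOn ℝ C g)
    {x v : EuclideanSpace ℝ (Fin n)} (hx : x ∈ C) {Lf Lg : ℝ}
    (hLf : Filter.Tendsto (fun t : ℝ => (f (x + t • v) - f x) / t) (𝓝[≠] 0) (𝓝 Lf))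
    (hLg : Filter.Tendsto (fun t : ℝ => (g (x + t • v) - g x) / t) (𝓝[≠] 0) (𝓝 Lg))
    (hne : Lf ≠ Lg) :
    ¬ IsCriticalPt (fun y => f y - g y) x :=
  stmt1_general hC hf hg hx hLf hLg hne
end
end

section
/- Let f be a convex function on an open convex set C ⊂ ℝⁿ, let x ∈ C and v ∈ ℝⁿ, and suppose that the two-sided directional derivative f′(x,v) := lim_{t→0} (f(x+tv)−f(x))/t exists. Then the full limit lim_{y→x, t→0⁺} (f(y+tv) − f(y))/t exists and equals f′(x,v). -/
open Filter Metric Set MeasureTheory Module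
open scoped Topology NNReal ENNReal

noncomputable section

/-!
Along each line `t ↦ y + t • v` a convex function has nondecreasing difference quotients, so for
`0 < t < s` the quotient at `(y, t)` lies between the quotients at `(y, -s)` and `(y, s)`. For fixed `s` these two bounds are continuous in `y`, and at `y = x` they are close to
`f′(x, v)` once `s` is small, because the two-sided limit exists.
-/

section DifferenceQuotient

variable {E : Type*} [NormedAddCommGroup E] [NormedSpace ℝ E] {C : Set E} {f : E → ℝ}

def diffQuot (f : E → ℝ) (y v : E) (t : ℝ) : ℝ := (f (y + t • v) - f y) / t

theorem ConvexOn.diffQuot_le_diffQuot_s2 (hf : ConvexOn ℝ C f) {y v : E} {σ τ : ℝ} (hy : y ∈ C)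
    (hσ : y + σ • v ∈ C) (hτ : y + τ • v ∈ C) (hσ0 : σ ≠ 0) (hτ0 : τ ≠ 0) (hστ : σ ≤ τ) :
    diffQuot f y v σ ≤ diffQuot f y v τ := by
  have hline : ∀ t : ℝ, AffineMap.lineMap y (y + v) t = y + t • v := fun t => by
    rw [AffineMap.lineMap_apply, vadd_eq_add, vsub_eq_sub, add_sub_cancel_left, add_comm]
  have hg := hf.comp_affineMap (AffineMap.lineMap y (y + v))
  have key := hg.secant_mono (a := 0) (x := σ) (y := τ) (by simpa [hline] using hy)
    (by simpa [hline] using hσ) (by simpa [hline] using hτ) hσ0 hτ0 hστ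
  simpa [diffQuot, hline] using key

theorem continuousAt_diffQuot (hC : IsOpen C) (hcont : ContinuousOn f C) {x v : E} {s : ℝ}
    (hx : x ∈ C) (hxs : x + s • v ∈ C) : ContinuousAt (fun y => diffQuot f y v s) x := by
  have hshift : ContinuousAt (fun y => f (y + s • v)) x :=
    ContinuousAt.comp (g := f) (hcont.continuousAt (hC.mem_nhds hxs))
      (continuous_add_const (s • v)).continuousAt
  exact (hshift.sub (hcont.continuousAt (hC.mem_nhds hx))).div_const s

abbrev diffQuotFilter (C : Set E) (x v : E) : Filter (E × ℝ) :=
  ((𝓝[C] x) ×ˢ (𝓝[>] (0 : ℝ))) ⊓ 𝓟 {p | p.1 + p.2 • v ∈ C}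

theorem IsOpen.eventually_add_const_mem (hC : IsOpen C) {x v : E} {s : ℝ} (hxs : x + s • v ∈ C) :
    ∀ᶠ y in 𝓝 x, y + s • v ∈ C :=
  (continuous_add_const (s • v)).continuousAt.preimage_mem_nhds (hC.mem_nhds hxs)

theorem ConvexOn.eventually_diffQuot_lt (hC : IsOpen C) (hf : ConvexOn ℝ C f)
    (hcont : ContinuousOn f C) {x v : E} (hx : x ∈ C) {s b : ℝ} (hs : 0 < s)
    (hxs : x + s • v ∈ C) (hb : diffQuot f x v s < b) :
    ∀ᶠ p in diffQuotFilter C x v, diffQuot f p.1 v p.2 < b := by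
  have hy : ∀ᶠ y in 𝓝[C] x, y ∈ C ∧ y + s • v ∈ C ∧ diffQuot f y v s < b :=
    eventually_mem_nhdsWithin.and <| Eventually.filter_mono nhdsWithin_le_nhds <|
      (hC.eventually_add_const_mem hxs).and
        ((continuousAt_diffQuot hC hcont hx hxs).eventually (gt_mem_nhds hb))
  have ht : ∀ᶠ t in 𝓝[>] (0 : ℝ), t ∈ Ioo 0 s := Ioo_mem_nhdsGT hs
  rw [eventually_inf_principal]
  filter_upwards [hy.prod_mk ht] with ⟨y, t⟩ ⟨⟨hyC, hysC, hys⟩, ht0, hts⟩ hytC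
  exact (hf.diffQuot_le_diffQuot_s2 hyC hytC hysC ht0.ne' hs.ne' hts.le).trans_lt hys

theorem ConvexOn.eventually_lt_diffQuot (hC : IsOpen C) (hf : ConvexOn ℝ C f)
    (hcont : ContinuousOn f C) {x v : E} (hx : x ∈ C) {s a : ℝ} (hs : s < 0)
    (hxs : x + s • v ∈ C) (ha : a < diffQuot f x v s) :
    ∀ᶠ p in diffQuotFilter C x v, a < diffQuot f p.1 v p.2 := by
  have hy : ∀ᶠ y in 𝓝[C] x, y ∈ C ∧ y + s • v ∈ C ∧ a < diffQuot f y v s :=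
    eventually_mem_nhdsWithin.and <| Eventually.filter_mono nhdsWithin_le_nhds <|
      (hC.eventually_add_const_mem hxs).and
        ((continuousAt_diffQuot hC hcont hx hxs).eventually (lt_mem_nhds ha))
  rw [eventually_inf_principal]
  filter_upwards [hy.prod_mk eventually_mem_nhdsWithin]
    with ⟨y, t⟩ ⟨⟨hyC, hysC, hys⟩, ht0⟩ hytC
  exact hys.trans_le
    (hf.diffQuot_le_diffQuot_s2 hyC hysC hytC hs.ne (ne_of_gt ht0) (hs.trans ht0).le)

end DifferenceQuotient

theorem stmt2_general {n : ℕ} {C : Set (EuclideanSpace ℝ (Fin n))} (hC : IsOpen C)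
    {f : EuclideanSpace ℝ (Fin n) → ℝ} (hf : ConvexOn ℝ C f)
    {x v : EuclideanSpace ℝ (Fin n)} (hx : x ∈ C) {L : ℝ}
    (hL : Filter.Tendsto (fun t : ℝ => (f (x + t • v) - f x) / t) (𝓝[≠] 0) (𝓝 L)) :
    Filter.Tendsto
      (fun p : EuclideanSpace ℝ (Fin n) × ℝ => (f (p.1 + p.2 • v) - f p.1) / p.2)
      (((𝓝[C] x) ×ˢ (𝓝[>] (0 : ℝ))) ⊓ 𝓟 {p | p.1 + p.2 • v ∈ C}) (𝓝 L) := by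
  have hcont : ContinuousOn f C := hf.continuousOn hC
  have hline : ∀ᶠ t in 𝓝 (0 : ℝ), x + t • v ∈ C := by
    have : Tendsto (fun t : ℝ => x + t • v) (𝓝 0) (𝓝 x) := by
      simpa using tendsto_const_nhds.add ((tendsto_id (x := 𝓝 (0 : ℝ))).smul_const v)
    exact this (hC.mem_nhds hx)
  refine tendsto_order.2 ⟨fun a ha => ?_, fun b hb => ?_⟩
  · obtain ⟨s, ⟨hxs, has⟩, hs⟩ := ((hline.filter_mono nhdsWithin_le_nhds).and
      ((hL.mono_left (nhdsLT_le_nhdsNE 0)).eventually (lt_mem_nhds ha))).and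
      eventually_mem_nhdsWithin |>.exists
    exact hf.eventually_lt_diffQuot hC hcont hx hs hxs has
  · obtain ⟨s, ⟨hxs, hsb⟩, hs⟩ := ((hline.filter_mono nhdsWithin_le_nhds).and
      ((hL.mono_left (nhdsGT_le_nhdsNE 0)).eventually (gt_mem_nhds hb))).and
      eventually_mem_nhdsWithin |>.exists
    exact hf.eventually_diffQuot_lt hC hcont hx hs hxs hsb

/-- for a convex function, existence of the two-sided directional
derivative `f′(x,v)` implies that the full limit `lim_{y→x, t→0⁺} (f(y+tv)-f(y))/t`
exists and equals `f′(x,v)` (the limit being taken over `y ∈ C` with `y + tv ∈ C`). -/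
theorem stmt2 {n : ℕ} {C : Set (EuclideanSpace ℝ (Fin n))} (hC : IsOpen C)
    (hCconv : Convex ℝ C) {f : EuclideanSpace ℝ (Fin n) → ℝ} (hf : ConvexOn ℝ C f)
    {x v : EuclideanSpace ℝ (Fin n)} (hx : x ∈ C) {L : ℝ}
    (hL : Filter.Tendsto (fun t : ℝ => (f (x + t • v) - f x) / t) (𝓝[≠] 0) (𝓝 L)) :
    Filter.Tendsto
      (fun p : EuclideanSpace ℝ (Fin n) × ℝ => (f (p.1 + p.2 • v) - f p.1) / p.2)
      (((𝓝[C] x) ×ˢ (𝓝[>] (0 : ℝ))) ⊓ 𝓟 {p | p.1 + p.2 • v ∈ C}) (𝓝 L) :=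
  stmt2_general hC hf hx hL
end
end

section
/- Let U ⊂ ℝⁿ be a nonempty open convex set, let d : U → ℝ be continuous, let r ∈ ℝ, and suppose there exist points b, c ∈ U with d(b) > r and d(c) < r. Then H^{n−1}( {x ∈ U : d(x) = r} ) > 0. -/
open Filter Metric Set MeasureTheory Module
open scoped Topology NNReal ENNReal

noncomputable section

/-!
Write `v = c - b`. By continuity, `d > r` near `b` and `d < r` near `c`, so for every `x` near `b`
the segment `[x, x + v]` lies in `U` and `d` changes sign along it: it meets the level set. Hence
the level set projects, along `v`, onto a neighbourhood of the projection of `b` in an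
`(n - 1)`-dimensional space, where Hausdorff and Lebesgue measure agree; projections are
Lipschitz, and Lipschitz maps do not increase Hausdorff measure.
-/

theorem LipschitzWith.hausdorffMeasure_pos_of_image_pos {X Y : Type*} [EMetricSpace X]
    [EMetricSpace Y] [MeasurableSpace X] [BorelSpace X] [MeasurableSpace Y] [BorelSpace Y]
    {K : ℝ≥0} {f : X → Y} (hf : LipschitzWith K f) {s : ℝ} (hs : 0 ≤ s) {S : Set X}
    (hS : 0 < μH[s] (f '' S)) : 0 < μH[s] S := by
  refine pos_iff_ne_zero.mpr fun h0 => hS.ne' (le_antisymm ?_ bot_le)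
  simpa [h0] using hf.hausdorffMeasure_image_le hs S

theorem hausdorffMeasure_pi_real_pos_of_mem_nhds {m : ℕ} {S : Set (Fin m → ℝ)} {y : Fin m → ℝ}
    (hS : S ∈ 𝓝 y) : 0 < μH[(m : ℝ)] S := by
  have hμ : (μH[(m : ℝ)] : Measure (Fin m → ℝ)) = volume := by
    simpa using hausdorffMeasure_pi_real (ι := Fin m)
  rw [hμ]
  exact Measure.measure_pos_of_mem_nhds volume hS

theorem exists_surjective_continuousLinearMap_apply_eq_zero {E : Type*} [NormedAddCommGroup E]
    [NormedSpace ℝ E] [FiniteDimensional ℝ E] {m : ℕ} (hE : finrank ℝ E = m + 1) {v : E}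
    (hv : v ≠ 0) : ∃ L : E →L[ℝ] (Fin m → ℝ), Function.Surjective L ∧ L v = 0 := by
  have hQ : finrank ℝ (E ⧸ ℝ ∙ v) = finrank ℝ (Fin m → ℝ) := by
    have := Submodule.finrank_quotient_add_finrank (ℝ ∙ v)
    rw [finrank_span_singleton hv, hE] at this
    simpa using this
  let L : E →ₗ[ℝ] (Fin m → ℝ) := (LinearEquiv.ofFinrankEq _ _ hQ).toLinearMap ∘ₗ (ℝ ∙ v).mkQ
  refine ⟨LinearMap.toContinuousLinearMap L, ?_, ?_⟩
  · exact (LinearEquiv.surjective _).comp (Submodule.mkQ_surjective _)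
  · simp [L, Submodule.mem_span_singleton_self]

section LevelSet

variable {E : Type*} [NormedAddCommGroup E] [NormedSpace ℝ E] {U : Set E} {d : E → ℝ} {r : ℝ}

theorem Convex.exists_mem_segment_eq_of_le_of_le (hUconv : Convex ℝ U) (hd : ContinuousOn d U)
    {x y : E} (hx : x ∈ U) (hy : y ∈ U) (hyr : d y ≤ r) (hrx : r ≤ d x) :
    ∃ z ∈ segment ℝ x y, z ∈ U ∧ d z = r := by
  have hseg : segment ℝ x y ⊆ U := hUconv.segment_subset hx hy
  obtain ⟨z, hz, hdz⟩ := (convex_segment x y).isPreconnected.intermediate_value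
    (right_mem_segment ℝ x y) (left_mem_segment ℝ x y) (hd.mono hseg) ⟨hyr, hrx⟩
  exact ⟨z, hz, hseg hz, hdz⟩

theorem eventually_exists_mem_segment_add_eq (hU : IsOpen U) (hUconv : Convex ℝ U)
    (hd : ContinuousOn d U) {b c : E} (hb : b ∈ U) (hc : c ∈ U) (hdb : r < d b)
    (hdc : d c < r) :
    ∀ᶠ x in 𝓝 b, ∃ z ∈ segment ℝ x (x + (c - b)), z ∈ U ∧ d z = r := by
  have near_b : ∀ᶠ x in 𝓝 b, x ∈ U ∧ r < d x :=
    (hU.eventually_mem hb).and ((hd.continuousAt (hU.mem_nhds hb)).eventually (lt_mem_nhds hdb))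
  have near_c : ∀ᶠ y in 𝓝 c, y ∈ U ∧ d y < r :=
    (hU.eventually_mem hc).and ((hd.continuousAt (hU.mem_nhds hc)).eventually (gt_mem_nhds hdc))
  have translate : Tendsto (· + (c - b)) (𝓝 b) (𝓝 c) := by
    simpa using (continuous_add_const (c - b)).tendsto b
  filter_upwards [near_b, translate.eventually near_c] with x ⟨hx, hdx⟩ ⟨hy, hdy⟩
  exact hUconv.exists_mem_segment_eq_of_le_of_le hd hx hy hdy.le hdx.le

theorem image_levelSet_mem_nhds {F : Type*} [AddCommGroup F] [Module ℝ F] [TopologicalSpace F]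
    (hU : IsOpen U) (hUconv : Convex ℝ U) (hd : ContinuousOn d U) {b c : E} (hb : b ∈ U)
    (hc : c ∈ U) (hdb : r < d b) (hdc : d c < r) (L : E →ₗ[ℝ] F) (hL : IsOpenMap L) (hLv : L (c - b) = 0) :
    L '' {x ∈ U | d x = r} ∈ 𝓝 (L b) := by
  refine mem_of_superset (hL.image_mem_nhds
    (eventually_exists_mem_segment_add_eq hU hUconv hd hb hc hdb hdc)) ?_
  rintro _ ⟨x, ⟨z, hz, hzU, hdz⟩, rfl⟩
  rw [segment_eq_image'] at hz
  obtain ⟨θ, -, rfl⟩ := hz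
  exact ⟨_, ⟨hzU, hdz⟩, by simp [hLv]⟩

theorem hausdorffMeasure_levelSet_pos [FiniteDimensional ℝ E] [MeasurableSpace E] [BorelSpace E]
    (hU : IsOpen U) (hUconv : Convex ℝ U) (hd : ContinuousOn d U) {b c : E} (hb : b ∈ U)
    (hc : c ∈ U) (hdb : r < d b) (hdc : d c < r) :
    0 < μH[(finrank ℝ E : ℝ) - 1] {x ∈ U | d x = r} := by
  have hv : c - b ≠ 0 := sub_ne_zero.mpr fun h => by rw [h] at hdc; linarith
  obtain ⟨m, hm⟩ := Nat.exists_eq_succ_of_ne_zero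
    (Module.finrank_pos_iff_exists_ne_zero (R := ℝ).mpr ⟨_, hv⟩).ne'
  obtain ⟨L, hLsurj, hLv⟩ := exists_surjective_continuousLinearMap_apply_eq_zero hm hv
  have hcast : ((finrank ℝ E : ℕ) : ℝ) - 1 = m := by rw [hm]; push_cast; ring
  have hnhds : L '' {x ∈ U | d x = r} ∈ 𝓝 (L b) :=
    image_levelSet_mem_nhds hU hUconv hd hb hc hdb hdc (L : E →ₗ[ℝ] Fin m → ℝ)
      (L.isOpenMap hLsurj) hLv
  rw [hcast]
  exact L.lipschitz.hausdorffMeasure_pos_of_image_pos m.cast_nonneg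
    (hausdorffMeasure_pi_real_pos_of_mem_nhds hnhds)

end LevelSet

theorem stmt16_general {n : ℕ} {U : Set (EuclideanSpace ℝ (Fin n))}
    (hU : IsOpen U) (hUconv : Convex ℝ U)
    {d : EuclideanSpace ℝ (Fin n) → ℝ} (hd : ContinuousOn d U) {r : ℝ}
    {b c : EuclideanSpace ℝ (Fin n)} (hb : b ∈ U) (hc : c ∈ U)
    (hdb : r < d b) (hdc : d c < r) :
    0 < μH[(n : ℝ) - 1] {x ∈ U | d x = r} := by
  simpa using hausdorffMeasure_levelSet_pos hU hUconv hd hb hc hdb hdc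

/-- if a continuous function `d` on a nonempty open convex set
`U ⊂ ℝⁿ` takes a value `> r` and a value `< r`, then the level set
`{x ∈ U : d x = r}` has positive `(n-1)`-dimensional Hausdorff measure. -/
theorem stmt16 {n : ℕ} {U : Set (EuclideanSpace ℝ (Fin n))} (hUne : U.Nonempty)
    (hU : IsOpen U) (hUconv : Convex ℝ U)
    {d : EuclideanSpace ℝ (Fin n) → ℝ} (hd : ContinuousOn d U) {r : ℝ}
    {b c : EuclideanSpace ℝ (Fin n)} (hb : b ∈ U) (hc : c ∈ U)
    (hdb : r < d b) (hdc : d c < r) :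
    0 < μH[(n : ℝ) - 1] {x ∈ U | d x = r} :=
  stmt16_general hU hUconv hd hb hc hdb hdc
end
end

section
/- Let n ∈ {1,2}, let U ⊂ ℝⁿ be open, let f be a locally DC function on U, and let S := {x ∈ U : f is Fréchet differentiable at x and f′(x) = 0} be the set of stationary points of f. Then H^{n/2}( f(S) ) = 0. -/
open Filter Metric Set MeasureTheory Module
open scoped Topology NNReal ENNReal

noncomputable section

/-!
Near a stationary point write `f = g - h` with `g`, `h` convex and continuous. A subgradient `p`
of `h` at a stationary point `a` is also a subgradient of `g = f + h` there, because `f` is flat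
to first order at `a`. Adding the supporting inequalities of `g` and `h` at two stationary points
`a`, `b` gives `|f a - f b| ≤ ⟪p_a - p_b, a - b⟫ ≤ ‖σ a - σ b‖² / 4` with `σ x = x + p_x`, so on the
stationary set `f` factors through a function `F` with `|F u - F v| ≤ C ‖u - v‖²` on a set
`A ⊆ ℝⁿ`.

Such an `F` maps `A` onto an `H^{n/2}`-null set. At a Lebesgue density point `x` of `A`, every
ball of radius `η |x - y|` centred on the segment `[x, y]` meets `A` once `y` is close to `x`, and
a chain of about `1/η` points of `A` along the segment gives `|F x - F y| ≤ 18 C η |x - y|²`. So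
at every density point `F` is `2`-Hölder with any prescribed constant `ε > 0` at some positive
scale, and the other points of `A` form an `H^n`-null set; for bounded `A` this gives
`H^{n/2}(F A) ≤ ε^{n/2} H^n(A)` for every `ε > 0`.
-/

section NormedSpace

variable {E : Type*} [NormedAddCommGroup E] [NormedSpace ℝ E]

theorem ConvexOn.exists_subgradient {B : Set E} {h : E → ℝ} (hh : ConvexOn ℝ B h)
    (hB : IsOpen B) (hc : ContinuousOn h B) {x : E} (hx : x ∈ B) :
    ∃ ℓ : E →L[ℝ] ℝ, ∀ y ∈ B, h x + ℓ (y - x) ≤ h y := by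
  -- separate `(x, h x)` from the open strict epigraph; the separating functional is not vertical
  have hs : IsOpen {q : E × ℝ | q.1 ∈ B ∧ h q.1 < q.2} := by
    have hcont : ContinuousOn (fun q : E × ℝ => h q.1 - q.2) (B ×ˢ univ) :=
      (hc.comp continuousOn_fst fun q hq => hq.1).sub continuousOn_snd
    convert hcont.isOpen_inter_preimage (hB.prod isOpen_univ) (isOpen_Iio (a := (0 : ℝ)))
      using 1
    ext q
    simp [sub_neg]
  obtain ⟨φ, hφ⟩ := geometric_hahn_banach_open_point (x := (x, h x)) hh.convex_strict_epigraph hs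
    fun hxs => lt_irrefl (h x) hxs.2
  set c := φ (0, 1)
  have hφ_apply (y : E) (t : ℝ) : φ (y, t) = φ (y, 0) + t * c := by
    have : (y, t) = (y, 0) + t • ((0 : E), (1 : ℝ)) := by ext <;> simp
    rw [this, map_add, map_smul, smul_eq_mul]
  have hc : c < 0 := by
    have := hφ (x, h x + 1) ⟨hx, by linarith⟩
    rw [hφ_apply x (h x + 1), hφ_apply x (h x)] at this
    linarith
  have key (y : E) (hy : y ∈ B) : φ (y, 0) - φ (x, 0) ≤ (h y - h x) * -c := by
    refine le_of_forall_pos_lt_add fun ε hε => ?_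
    have := hφ (y, h y + ε / -c) ⟨hy, by linarith [div_pos hε (neg_pos.2 hc)]⟩
    rw [hφ_apply y, hφ_apply x (h x), add_mul, div_mul_eq_mul_div, div_neg,
      mul_div_cancel_right₀ _ hc.ne] at this
    linarith
  refine ⟨(-c)⁻¹ • φ.comp (ContinuousLinearMap.inl ℝ E ℝ), fun y hy => ?_⟩
  have hsub : φ (y - x, 0) = φ (y, 0) - φ (x, 0) := by
    rw [← map_sub, Prod.mk_sub_mk, sub_zero]
  have := (inv_mul_le_iff₀ (neg_pos.2 hc)).2 (by linarith [key y hy] :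
    φ (y, 0) - φ (x, 0) ≤ -c * (h y - h x))
  simp only [smul_apply, ContinuousLinearMap.comp_apply,
    ContinuousLinearMap.inl_apply, hsub, smul_eq_mul]
  linarith

theorem ConvexOn.le_of_eventually_le_add_mul_norm {B : Set E} {g : E → ℝ} (hg : ConvexOn ℝ B g)
    {x : E} (hx : x ∈ B) {ℓ : E →L[ℝ] ℝ}
    (hℓ : ∀ ε > 0, ∀ᶠ z in 𝓝 x, z ∈ B → g x + ℓ (z - x) ≤ g z + ε * ‖z - x‖)
    {y : E} (hy : y ∈ B) : g x + ℓ (y - x) ≤ g y := by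
  have hlim : Tendsto (fun t : ℝ => x + t • (y - x)) (𝓝[>] 0) (𝓝 x) := by
    have : Continuous (fun t : ℝ => x + t • (y - x)) := by fun_prop
    simpa using (this.tendsto 0).mono_left nhdsWithin_le_nhds
  refine le_of_forall_pos_le_add fun δ hδ => ?_
  set ε := δ / (‖y - x‖ + 1)
  have hε : 0 < ε := by positivity
  obtain ⟨t, hlow, ht0, ht1⟩ :=
    ((hlim.eventually (hℓ ε hε)).and (Ioc_mem_nhdsGT one_pos)).exists
  have hconv : g (x + t • (y - x)) ≤ (1 - t) * g x + t * g y := by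
    have heq : (1 - t) • x + t • y = x + t • (y - x) := by module
    simpa only [heq, smul_eq_mul] using hg.2 hx hy (sub_nonneg.2 ht1) ht0.le (by ring)
  have hlow' := hlow (hg.1.add_smul_sub_mem hx hy ⟨ht0.le, ht1⟩)
  rw [add_sub_cancel_left, map_smul, smul_eq_mul, norm_smul, Real.norm_of_nonneg ht0.le] at hlow'
  have hεδ : ε * ‖y - x‖ ≤ δ := by
    rw [div_mul_eq_mul_div, div_le_iff₀ (by positivity)]
    nlinarith [norm_nonneg (y - x)]
  nlinarith

theorem DCOn.mono {f : E → ℝ} {C D : Set E} (hf : DCOn f C) (hD : Convex ℝ D) (hDC : D ⊆ C) :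
    DCOn f D := by
  obtain ⟨g, h, hg, hh, hgc, hhc, hfgh⟩ := hf
  exact ⟨g, h, hg.subset hDC hD, hh.subset hDC hD, hgc.mono hDC, hhc.mono hDC,
    fun x hx => hfgh x (hDC hx)⟩

theorem exists_common_subgradient_of_hasFDerivAt_zero {B : Set E} (hB : IsOpen B)
    {f g h : E → ℝ} (hg : ConvexOn ℝ B g) (hh : ConvexOn ℝ B h) (hhc : ContinuousOn h B)
    (hfgh : ∀ z ∈ B, f z = g z - h z) {x : E} (hx : x ∈ B)
    (hf : HasFDerivAt f (0 : E →L[ℝ] ℝ) x) :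
    ∃ ℓ : E →L[ℝ] ℝ, ∀ y ∈ B, g x + ℓ (y - x) ≤ g y ∧ h x + ℓ (y - x) ≤ h y := by
  obtain ⟨ℓ, hℓ⟩ := hh.exists_subgradient hB hhc hx
  refine ⟨ℓ, fun y hy => ⟨hg.le_of_eventually_le_add_mul_norm hx (fun ε hε => ?_) hy, hℓ y hy⟩⟩
  filter_upwards [hf.isLittleO.def hε] with z hz hzB
  rw [zero_apply, sub_zero, Real.norm_eq_abs, hfgh z hzB, hfgh x hx] at hz
  linarith [(abs_le.1 hz).1, hℓ z hzB]

theorem abs_sub_le_of_forall_lineMap_exists_near {A : Set E} {F : E → ℝ} {C : ℝ≥0} {η : ℝ}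
    (hη : 0 < η) (hη1 : η ≤ 1) (hF : ∀ a ∈ A, ∀ b ∈ A, |F a - F b| ≤ C * dist a b ^ 2)
    {x y : E} (hx : x ∈ A) (hy : y ∈ A)
    (hnear : ∀ t ∈ Icc (0 : ℝ) 1, ∃ z ∈ A, dist z (AffineMap.lineMap x y t) ≤ η * dist x y) :
    |F x - F y| ≤ 18 * C * η * dist x y ^ 2 := by
  set d := dist x y
  set N := ⌈η⁻¹⌉₊
  have hN : η⁻¹ ≤ N := Nat.le_ceil _
  have hN' : (N : ℝ) < η⁻¹ + 1 := Nat.ceil_lt_add_one (inv_nonneg.2 hη.le)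
  have hN0 : (0 : ℝ) < N := (inv_pos.2 hη).trans_le hN
  set w : ℕ → E := fun i => AffineMap.lineMap x y ((i : ℝ) / N)
  have hchain (i : ℕ) : ∃ z ∈ A,
      (i ≤ N → dist z (w i) ≤ η * d) ∧ (i = 0 → z = x) ∧ (i = N → z = y) := by
    rcases Nat.eq_zero_or_pos i with rfl | hi0
    · refine ⟨x, hx, fun _ => ?_, fun _ => rfl, fun h => ?_⟩
      · simp only [w, Nat.cast_zero, zero_div, AffineMap.lineMap_apply_zero, dist_self]
        positivity
      rw [← h, Nat.cast_zero] at hN0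
      exact absurd hN0 (lt_irrefl _)
    rcases lt_trichotomy i N with hiN | rfl | hiN
    · obtain ⟨z, hzA, hz⟩ := hnear (i / N)
        ⟨by positivity, div_le_one_of_le₀ (by exact_mod_cast hiN.le) hN0.le⟩
      exact ⟨z, hzA, fun _ => hz, fun h => by omega, fun h => by omega⟩
    · refine ⟨y, hy, fun _ => ?_, fun h => by omega, fun _ => rfl⟩
      simp only [w, div_self hN0.ne', AffineMap.lineMap_apply_one, dist_self]
      positivity
    · exact ⟨x, hx, fun h => by omega, fun h => by omega, fun h => by omega⟩
  choose z hzA hzw hz0 hzN using hchain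
  have hstep (i : ℕ) (hi : i < N) : dist (z i) (z (i + 1)) ≤ 3 * η * d := by
    have hw : dist (w i) (w (i + 1)) ≤ η * d := by
      have : dist ((i : ℝ) / N) (((i + 1 : ℕ) : ℝ) / N) = (N : ℝ)⁻¹ := by
        rw [Real.dist_eq, ← sub_div, Nat.cast_succ, sub_add_cancel_left, abs_div, abs_neg,
          abs_one, abs_of_pos hN0, one_div]
      rw [dist_lineMap_lineMap, this]
      gcongr
      exact inv_le_of_inv_le₀ hη hN
    calc dist (z i) (z (i + 1))
        ≤ dist (z i) (w i) + dist (w i) (w (i + 1)) + dist (z (i + 1)) (w (i + 1)) := by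
          rw [dist_comm (z (i + 1))]; exact dist_triangle4 _ _ _ _
      _ ≤ η * d + η * d + η * d := by gcongr <;> apply hzw <;> omega
      _ = 3 * η * d := by ring
  calc |F x - F y| = dist (F (z 0)) (F (z N)) := by rw [hz0 0 rfl, hzN N rfl, Real.dist_eq]
    _ ≤ ∑ i ∈ Finset.range N, dist (F (z i)) (F (z (i + 1))) :=
      dist_le_range_sum_dist (fun i => F (z i)) N
    _ ≤ ∑ _i ∈ Finset.range N, C * (3 * η * d) ^ 2 := by
      refine Finset.sum_le_sum fun i hi => (hF _ (hzA i) _ (hzA (i + 1))).trans ?_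
      gcongr
      exact hstep i (Finset.mem_range.1 hi)
    _ = N * η * (9 * C * η * d ^ 2) := by
      rw [Finset.sum_const, Finset.card_range, nsmul_eq_mul]
      ring
    _ ≤ 2 * (9 * C * η * d ^ 2) := by
      gcongr
      calc N * η ≤ (η⁻¹ + 1) * η := by gcongr
        _ ≤ 2 := by rw [add_mul, inv_mul_cancel₀ hη.ne']; linarith
    _ = 18 * C * η * d ^ 2 := by ring

end NormedSpace

theorem hausdorffMeasure_image_le_of_holderOnWith_inter {X Y : Type*} [EMetricSpace X]
    [EMetricSpace Y] [MeasurableSpace X] [BorelSpace X] [MeasurableSpace Y] [BorelSpace Y]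
    {C r : ℝ≥0} (hC : C ≠ 0) (hr : 0 < r)
    {f : X → Y} {s : Set X} {δ : ℝ≥0∞} (hδ : 0 < δ)
    (hf : ∀ t : Set X, ediam t ≤ δ → HolderOnWith C r f (t ∩ s)) {d : ℝ} (hd : 0 ≤ d) :
    μH[d] (f '' s) ≤ (C : ℝ≥0∞) ^ d * μH[r * d] s := by
  -- the proof of `HolderOnWith.hausdorffMeasure_image_le`, run with covers of diameter `≤ δ`
  have hCd0 : (C : ℝ≥0∞) ^ d ≠ 0 := by simp [hC]
  have hCd : (C : ℝ≥0∞) ^ d ≠ ∞ := by simp [hd]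
  simp only [Measure.hausdorffMeasure_apply, ENNReal.mul_iSup, ENNReal.mul_iInf_of_ne hCd0 hCd,
    ← ENNReal.tsum_mul_left]
  refine iSup_le fun R => iSup_le fun hR => ?_
  have : Tendsto (fun d : ℝ≥0∞ => (C : ℝ≥0∞) * d ^ (r : ℝ)) (𝓝 0) (𝓝 0) :=
    ENNReal.tendsto_const_mul_rpow_nhds_zero_of_pos ENNReal.coe_ne_top hr
  obtain ⟨ρ, hρ0, H⟩ := ENNReal.nhds_zero_basis_Iic.eventually_iff.1
    (this.eventually (gt_mem_nhds hR))
  have hdiam (t : Set X) (ht : ediam t ≤ min ρ δ) :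
      ediam (f '' (t ∩ s)) ≤ C * ediam t ^ (r : ℝ) :=
    (hf t (ht.trans (min_le_right _ _))).ediam_image_le.trans (by gcongr; exact inter_subset_left)
  refine le_iSup₂_of_le (min ρ δ) (lt_min hρ0 hδ) <| iInf₂_mono' fun t hst ↦
    ⟨fun n => f '' (t n ∩ s), ?_, iInf_mono' fun htδ ↦
      ⟨fun n => (hdiam _ (htδ n)).trans (H ((htδ n).trans (min_le_left _ _))).le, ?_⟩⟩
  · grw [← image_iUnion, ← iUnion_inter, ← hst, inter_self]
  · refine ENNReal.tsum_le_tsum fun n => ?_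
    simp only [iSup_le_iff, image_nonempty]
    intro hft
    simp only [Nonempty.mono ((t n).inter_subset_left) hft, ciSup_pos]
    rw [ENNReal.rpow_mul, ← ENNReal.mul_rpow_of_nonneg _ _ hd]
    gcongr
    exact hdiam _ (htδ n)

theorem holderOnWith_two_of_abs_sub_le {X : Type*} [PseudoMetricSpace X] {F : X → ℝ} {C : ℝ≥0}
    {s : Set X} (hF : ∀ x ∈ s, ∀ y ∈ s, |F x - F y| ≤ C * dist x y ^ 2) :
    HolderOnWith C 2 F s := by
  intro x hx y hy
  rw [edist_dist, edist_dist, NNReal.coe_ofNat,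
    ENNReal.ofReal_rpow_of_nonneg dist_nonneg zero_le_two, ← ENNReal.ofReal_coe_nnreal,
    ← ENNReal.ofReal_mul C.coe_nonneg, Real.rpow_two]
  exact ENNReal.ofReal_le_ofReal (by simpa [Real.dist_eq] using hF x hx y hy)

theorem hausdorffMeasure_image_le_of_forall_eventually_abs_sub_le {X : Type*} [MetricSpace X]
    [MeasurableSpace X] [BorelSpace X] {G : Set X} {F : X → ℝ} {ε : ℝ≥0} (hε : 0 < ε)
    (hF : ∀ x ∈ G, ∀ᶠ y in 𝓝 x, y ∈ G → |F x - F y| ≤ ε * dist x y ^ 2) {d : ℝ} (hd : 0 ≤ d) :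
    μH[d] (F '' G) ≤ (ε : ℝ≥0∞) ^ d * μH[2 * d] G := by
  set D : ℕ → Set X := fun m =>
    {x ∈ G | ∀ y ∈ G, dist x y ≤ (m + 1 : ℝ)⁻¹ → |F x - F y| ≤ ε * dist x y ^ 2}
  have hD : Monotone fun m => F '' D m := fun m m' hm => image_mono fun x hx =>
    ⟨hx.1, fun y hy hxy => hx.2 y hy (hxy.trans (by gcongr))⟩
  have hGD : G ⊆ ⋃ m, D m := by
    intro x hx
    obtain ⟨δ, hδ, hxδ⟩ := Metric.eventually_nhds_iff.1 (hF x hx)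
    obtain ⟨m, hm⟩ := exists_nat_one_div_lt hδ
    refine mem_iUnion.2 ⟨m, hx, fun y hy hxy => hxδ ?_ hy⟩
    rw [dist_comm]
    exact hxy.trans_lt (by simpa using hm)
  have hDm (m : ℕ) : μH[d] (F '' D m) ≤ (ε : ℝ≥0∞) ^ d * μH[2 * d] G := by
    have hscale : (0 : ℝ≥0∞) < ENNReal.ofReal (m + 1 : ℝ)⁻¹ := ENNReal.ofReal_pos.2 (by positivity)
    have hhol (t : Set X) (ht : ediam t ≤ ENNReal.ofReal (m + 1 : ℝ)⁻¹) :
        HolderOnWith ε 2 F (t ∩ D m) := by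
      refine holderOnWith_two_of_abs_sub_le fun x hx y hy => hx.2.2 y hy.2.1 ?_
      have := (edist_le_ediam_of_mem hx.1 hy.1).trans ht
      rwa [edist_dist, ENNReal.ofReal_le_ofReal_iff (by positivity)] at this
    refine (hausdorffMeasure_image_le_of_holderOnWith_inter hε.ne' two_pos hscale hhol hd).trans ?_
    rw [NNReal.coe_ofNat]
    gcongr
    exact fun x hx => hx.1
  calc μH[d] (F '' G) ≤ μH[d] (⋃ m, F '' D m) := by
        rw [← image_iUnion]
        exact measure_mono (image_mono hGD)
    _ = ⨆ m, μH[d] (F '' D m) := hD.measure_iUnion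
    _ ≤ (ε : ℝ≥0∞) ^ d * μH[2 * d] G := iSup_le hDm

section FiniteDimensional

variable {E : Type*} [NormedAddCommGroup E] [NormedSpace ℝ E] [FiniteDimensional ℝ E]
  [MeasurableSpace E] [BorelSpace E]

theorem eventually_inter_closedBall_nonempty_of_tendsto_density (μ : Measure E)
    [μ.IsAddHaarMeasure] {A : Set E} {x : E}
    (hx : Tendsto (fun r => μ (A ∩ closedBall x r) / μ (closedBall x r)) (𝓝[>] 0) (𝓝 1))
    {η : ℝ} (hη : 0 < η) :
    ∀ᶠ r in 𝓝[>] 0, ∀ w, closedBall w (η * r) ⊆ closedBall x r →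
      (A ∩ closedBall w (η * r)).Nonempty := by
  set c := ENNReal.ofReal (η ^ finrank ℝ E)
  have hc : 1 - c < 1 :=
    ENNReal.sub_lt_self ENNReal.one_ne_top one_ne_zero (ENNReal.ofReal_pos.2 (by positivity)).ne'
  filter_upwards [hx (Ioi_mem_nhds hc), self_mem_nhdsWithin] with r hr (hr0 : 0 < r) w hw
  by_contra hempty
  have hsub : A ∩ closedBall x r ⊆ closedBall x r \ closedBall w (η * r) :=
    fun z hz => ⟨hz.2, fun hzw => hempty ⟨z, hz.1, hzw⟩⟩
  have hμw : μ (closedBall w (η * r)) = c * μ (closedBall x r) := by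
    rw [Measure.addHaar_closedBall_mul μ w hη.le hr0.le, Measure.addHaar_closedBall_center μ x]
  have hle : μ (A ∩ closedBall x r) ≤ (1 - c) * μ (closedBall x r) :=
    calc μ (A ∩ closedBall x r) ≤ μ (closedBall x r \ closedBall w (η * r)) := measure_mono hsub
      _ = μ (closedBall x r) - μ (closedBall w (η * r)) :=
        measure_sdiff hw measurableSet_closedBall.nullMeasurableSet measure_closedBall_lt_top.ne
      _ = (1 - c) * μ (closedBall x r) := by
        rw [hμw, ENNReal.sub_mul fun _ _ => measure_closedBall_lt_top.ne, one_mul]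
  exact (ENNReal.div_le_of_le_mul hle).not_gt hr

theorem eventually_abs_sub_le_mul_dist_sq_of_tendsto_density (μ : Measure E)
    [μ.IsAddHaarMeasure] {A : Set E} {F : E → ℝ} {C : ℝ≥0}
    (hF : ∀ a ∈ A, ∀ b ∈ A, |F a - F b| ≤ C * dist a b ^ 2) {x : E} (hx : x ∈ A)
    (hdens : Tendsto (fun r => μ (A ∩ closedBall x r) / μ (closedBall x r)) (𝓝[>] 0) (𝓝 1))
    {ε : ℝ} (hε : 0 < ε) :
    ∀ᶠ y in 𝓝 x, y ∈ A → |F x - F y| ≤ ε * dist x y ^ 2 := by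
  set η := min 1 (ε / (18 * C + 1))
  have hη : 0 < η := lt_min one_pos (by positivity)
  have hCη : 18 * C * η ≤ ε := by
    calc 18 * C * η ≤ (18 * C + 1) * (ε / (18 * C + 1)) := by
          gcongr
          · linarith
          · exact min_le_right _ _
      _ = ε := by field_simp
  obtain ⟨r₀, hr₀, hball⟩ := mem_nhdsGT_iff_exists_Ioc_subset.1
    (eventually_inter_closedBall_nonempty_of_tendsto_density μ hdens (half_pos hη))
  filter_upwards [ball_mem_nhds x (half_pos hr₀)] with y hy hyA
  set d := dist x y
  rcases (dist_nonneg : 0 ≤ d).eq_or_lt with hd | hd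
  · obtain rfl := dist_eq_zero.1 hd.symm
    simp only [sub_self, abs_zero]
    positivity
  have hnear (t : ℝ) (ht : t ∈ Icc (0 : ℝ) 1) :
      ∃ z ∈ A, dist z (AffineMap.lineMap x y t) ≤ η * d := by
    have hsub : closedBall (AffineMap.lineMap x y t) (η / 2 * (2 * d)) ⊆ closedBall x (2 * d) := by
      refine closedBall_subset_closedBall' ?_
      rw [dist_lineMap_left, Real.norm_of_nonneg ht.1]
      nlinarith [min_le_left 1 (ε / (18 * C + 1)), ht.2]
    have h2d : 2 * d ∈ Ioc 0 r₀ := ⟨by positivity, by rw [mem_ball, dist_comm] at hy; linarith⟩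
    obtain ⟨z, hzA, hz⟩ := hball h2d _ hsub
    exact ⟨z, hzA, by rw [mem_closedBall] at hz; linarith⟩
  calc |F x - F y| ≤ 18 * C * η * d ^ 2 :=
        abs_sub_le_of_forall_lineMap_exists_near hη (min_le_left _ _) hF hx hyA hnear
    _ ≤ ε * d ^ 2 := by gcongr

theorem hausdorffMeasure_image_eq_zero_of_abs_sub_le_mul_dist_sq_of_ne_top
    (hE : 0 < finrank ℝ E) {A : Set E} {F : E → ℝ} {C : ℝ≥0}
    (hF : ∀ a ∈ A, ∀ b ∈ A, |F a - F b| ≤ C * dist a b ^ 2) (hA : μH[finrank ℝ E] A ≠ ∞) :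
    μH[finrank ℝ E / 2] (F '' A) = 0 := by
  set k : ℝ := (finrank ℝ E : ℝ)
  have hk : 0 < k / 2 := by positivity
  have hk2 : 2 * (k / 2) = k := by ring
  set G := {x ∈ A | Tendsto (fun r => μH[k] (A ∩ closedBall x r) / μH[k] (closedBall x r))
    (𝓝[>] 0) (𝓝 1)}
  have hbad : μH[k] (A \ G) = 0 := by
    have hae := Besicovitch.ae_tendsto_measure_inter_div (μH[k] : Measure E) A
    rw [ae_iff] at hae
    refine measure_mono_null ?_
      (nonpos_iff_eq_zero.1 ((Measure.le_restrict_apply _ _).trans hae.le))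
    exact fun x hx => ⟨fun h => hx.2 ⟨hx.1, h⟩, hx.1⟩
  have hbad_image : μH[k / 2] (F '' (A \ G)) = 0 := by
    have := (holderOnWith_two_of_abs_sub_le (s := A \ G) fun a ha b hb =>
      hF a ha.1 b hb.1).hausdorffMeasure_image_le two_pos hk.le
    rw [NNReal.coe_ofNat, hk2, hbad, mul_zero] at this
    exact nonpos_iff_eq_zero.1 this
  have hgood (ε : ℝ≥0) (hε : 0 < ε) : μH[k / 2] (F '' G) ≤ (ε : ℝ≥0∞) ^ (k / 2) * μH[k] A := by
    refine (hausdorffMeasure_image_le_of_forall_eventually_abs_sub_le hε (fun x hx => ?_)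
      hk.le).trans ?_
    · filter_upwards [eventually_abs_sub_le_mul_dist_sq_of_tendsto_density _ hF hx.1 hx.2
        (ε := ε) hε] with y hy hyG using hy hyG.1
    · rw [hk2]
      gcongr
      exact sep_subset _ _
  have hgood_image : μH[k / 2] (F '' G) = 0 := by
    have hlim : Tendsto (fun ε : ℝ≥0 => (ε : ℝ≥0∞) ^ (k / 2) * μH[k] A) (𝓝[>] 0) (𝓝 0) := by
      have := ENNReal.tendsto_const_mul_rpow_nhds_zero_of_pos hA hk
      simpa only [mul_comm, Function.comp_def] using
        this.comp ((ENNReal.continuous_coe.tendsto' 0 0 ENNReal.coe_zero).mono_left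
          nhdsWithin_le_nhds)
    exact nonpos_iff_eq_zero.1 (ge_of_tendsto hlim (eventually_nhdsWithin_of_forall hgood))
  refine measure_mono_null ?_ (measure_union_null hbad_image hgood_image)
  rw [← image_union, sdiff_union_self]
  exact image_mono subset_union_left

theorem hausdorffMeasure_image_eq_zero_of_abs_sub_le_mul_dist_sq (hE : 0 < finrank ℝ E)
    {A : Set E} {F : E → ℝ} {C : ℝ≥0} (hF : ∀ a ∈ A, ∀ b ∈ A, |F a - F b| ≤ C * dist a b ^ 2) :
    μH[finrank ℝ E / 2] (F '' A) = 0 := by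
  rw [← inter_univ A, ← iUnion_ball_nat 0, inter_iUnion, image_iUnion]
  refine measure_iUnion_null fun j =>
    hausdorffMeasure_image_eq_zero_of_abs_sub_le_mul_dist_sq_of_ne_top hE
      (fun a ha b hb => hF a ha.1 b hb.1) ?_
  exact ne_top_of_le_ne_top measure_ball_lt_top.ne (measure_mono inter_subset_right)

theorem hausdorffMeasure_image_eq_zero_of_abs_sub_le_mul_dist_comp_sq {α : Type*}
    (hE : 0 < finrank ℝ E) {A : Set α} {f : α → ℝ} {σ : α → E} {C : ℝ≥0}
    (hf : ∀ a ∈ A, ∀ b ∈ A, |f a - f b| ≤ C * dist (σ a) (σ b) ^ 2) :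
    μH[finrank ℝ E / 2] (f '' A) = 0 := by
  obtain rfl | ⟨a₀, -⟩ := A.eq_empty_or_nonempty
  · simp
  have : Nonempty α := ⟨a₀⟩
  have hinv {a : α} (ha : a ∈ A) : f (Function.invFunOn σ A (σ a)) = f a := by
    have hex : ∃ b ∈ A, σ b = σ a := ⟨a, ha, rfl⟩
    have := hf _ (Function.invFunOn_mem hex) a ha
    rw [Function.invFunOn_eq hex, dist_self] at this
    simpa [sub_eq_zero] using this
  have himage : f '' A = (f ∘ Function.invFunOn σ A) '' (σ '' A) := by
    rw [image_image]
    exact image_congr fun a ha => (hinv ha).symm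
  rw [himage]
  refine hausdorffMeasure_image_eq_zero_of_abs_sub_le_mul_dist_sq hE (C := C) ?_
  rintro - ⟨a, ha, rfl⟩ - ⟨b, hb, rfl⟩
  simpa only [Function.comp_apply, hinv ha, hinv hb] using hf a ha b hb

end FiniteDimensional

section InnerProductSpace

open scoped RealInnerProductSpace

variable {E : Type*} [NormedAddCommGroup E] [InnerProductSpace ℝ E]

theorem abs_sub_sub_le_of_subgradients {g h : E → ℝ} {a b p q : E}
    (hga : g a + ⟪p, b - a⟫ ≤ g b) (hha : h a + ⟪p, b - a⟫ ≤ h b)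
    (hgb : g b + ⟪q, a - b⟫ ≤ g a) (hhb : h b + ⟪q, a - b⟫ ≤ h a) :
    |(g a - h a) - (g b - h b)| ≤ 4⁻¹ * ‖(a + p) - (b + q)‖ ^ 2 := by
  have hba : b - a = -(a - b) := (neg_sub a b).symm
  rw [hba, inner_neg_right] at hga hha
  have hmono : |(g a - h a) - (g b - h b)| ≤ ⟪p - q, a - b⟫ := by
    rw [inner_sub_left]
    exact abs_le.2 ⟨by linarith, by linarith⟩
  have hpq : (a + p) - (b + q) = (p - q) + (a - b) := by abel
  have hsq := norm_sub_sq_real (p - q) (a - b)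
  rw [hpq, norm_add_sq_real]
  nlinarith [sq_nonneg ‖(p - q) - (a - b)‖]

variable [FiniteDimensional ℝ E] [MeasurableSpace E] [BorelSpace E]

theorem DCOn.hausdorffMeasure_image_stationary_eq_zero (hE : 0 < finrank ℝ E) {B : Set E}
    (hB : IsOpen B) {f : E → ℝ} (hf : DCOn f B) :
    μH[finrank ℝ E / 2] (f '' {x ∈ B | HasFDerivAt f (0 : E →L[ℝ] ℝ) x}) = 0 := by
  obtain ⟨g, h, hg, hh, -, hhc, hfgh⟩ := hf
  have hP (x : E) (hx : x ∈ {x ∈ B | HasFDerivAt f (0 : E →L[ℝ] ℝ) x}) :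
      ∃ p : E, ∀ y ∈ B, g x + ⟪p, y - x⟫ ≤ g y ∧ h x + ⟪p, y - x⟫ ≤ h y := by
    obtain ⟨ℓ, hℓ⟩ := exists_common_subgradient_of_hasFDerivAt_zero hB hg hh hhc hfgh hx.1 hx.2
    exact ⟨(InnerProductSpace.toDual ℝ E).symm ℓ, by
      simpa only [InnerProductSpace.toDual_symm_apply] using hℓ⟩
  choose! P hP using hP
  refine hausdorffMeasure_image_eq_zero_of_abs_sub_le_mul_dist_comp_sq hE (σ := fun x => x + P x)
    (C := 4⁻¹) fun a ha b hb => ?_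
  rw [hfgh a ha.1, hfgh b hb.1, dist_eq_norm]
  exact abs_sub_sub_le_of_subgradients (hP a ha b hb.1).1 (hP a ha b hb.1).2
    (hP b hb a ha.1).1 (hP b hb a ha.1).2

end InnerProductSpace

theorem stmt18_general {n : ℕ} (hn : n = 1 ∨ n = 2) {U : Set (EuclideanSpace ℝ (Fin n))}
    {f : EuclideanSpace ℝ (Fin n) → ℝ} (hf : LocallyDCOn f U) :
    μH[(n : ℝ) / 2]
      (f '' {x ∈ U | HasFDerivAt f (0 : EuclideanSpace ℝ (Fin n) →L[ℝ] ℝ) x}) = 0 := by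
  have hn0 : 0 < finrank ℝ (EuclideanSpace ℝ (Fin n)) := by
    rw [finrank_euclideanSpace_fin]; omega
  obtain ⟨𝒯, h𝒯c, h𝒯, h𝒯U⟩ := TopologicalSpace.isOpen_sUnion_countable
    {V | IsOpen V ∧ DCOn f V} fun V hV => hV.1
  have hcover : {x ∈ U | HasFDerivAt f (0 : EuclideanSpace ℝ (Fin n) →L[ℝ] ℝ) x} ⊆
      ⋃ V ∈ 𝒯, {x ∈ V | HasFDerivAt f (0 : EuclideanSpace ℝ (Fin n) →L[ℝ] ℝ) x} := by
    rintro x ⟨hxU, hx⟩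
    obtain ⟨C, hC, -, hCx, hfC⟩ := hf x hxU
    have hx𝒯 : x ∈ ⋃₀ 𝒯 := h𝒯U ▸ ⟨interior C,
      ⟨isOpen_interior, hfC.mono hC.interior interior_subset⟩, mem_interior_iff_mem_nhds.2 hCx⟩
    obtain ⟨V, hV, hxV⟩ := hx𝒯
    exact mem_biUnion hV ⟨hxV, hx⟩
  refine measure_mono_null (image_mono hcover) ?_
  rw [image_iUnion₂, measure_biUnion_null_iff h𝒯c]
  intro V hV
  simpa only [finrank_euclideanSpace_fin] using
    DCOn.hausdorffMeasure_image_stationary_eq_zero hn0 (h𝒯 hV).1 (h𝒯 hV).2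

/-- Morse–Sard theorem for locally DC functions in dimensions
`n ∈ {1,2}`: the set of values of `f` at its stationary points is `H^{n/2}`-null. -/
theorem stmt18 {n : ℕ} (hn : n = 1 ∨ n = 2) {U : Set (EuclideanSpace ℝ (Fin n))}
    (hU : IsOpen U) {f : EuclideanSpace ℝ (Fin n) → ℝ} (hf : LocallyDCOn f U) :
    μH[(n : ℝ) / 2]
      (f '' {x ∈ U | HasFDerivAt f (0 : EuclideanSpace ℝ (Fin n) →L[ℝ] ℝ) x}) = 0 :=
  stmt18_general hn hf
end
end
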